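/- arXiv:2001.11988 — 3 statements merged into one kernel-verified Lean document; each statement's English description precedes it below -/
import Mathlib

section
/- For a probability measure ρ on S^{d-1} and the weighted mean v_α = (∫ v e^{-αE(v)} dρ)/(∫ e^{-αE(v)} dρ), one has ∫ |v − v_α|^2 dρ(v) ≤ 4 C_{α,E} V(ρ), where C_{α,E} = e^{α(sup E − inf E)} and V(ρ) = (1/2)∫|v − E(ρ)|^2 dρ. -/
/-!
Write `w = exp (-α E)`, so that `v_α` is the `w`-weighted mean of `ρ`. On the support of `ρ` the
weight lies between `L = exp (-α sup E)` and `U = exp (-α inf E)`, and `U / L = C_{α,E}`. The weighted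
mean minimises the weighted second moment (parallel-axis identity), hence
`∫ |v - v_α|² ≤ L⁻¹ ∫ w |v - v_α|² ≤ L⁻¹ ∫ w |v - E(ρ)|² ≤ (U / L) ∫ |v - E(ρ)|² = 2 C_{α,E} V(ρ)`.
-/

open MeasureTheory Metric Real RealInnerProductSpace

section WeightedMean

variable {E : Type*} [NormedAddCommGroup E] [InnerProductSpace ℝ E] [CompleteSpace E]
  [MeasurableSpace E] {μ : Measure E} {w : E → ℝ} {c : E}

theorem integral_mul_norm_sub_sq_sub_integral_mul_norm_sub_sq (hw : Integrable w μ)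
    (hwv : Integrable (fun v => w v • v) μ) (hc : (∫ v, w v ∂μ) • c = ∫ v, w v • v ∂μ) (x : E)
    (hx : Integrable (fun v => w v * ‖v - x‖ ^ 2) μ)
    (hc' : Integrable (fun v => w v * ‖v - c‖ ^ 2) μ) :
    ∫ v, w v * ‖v - x‖ ^ 2 ∂μ - ∫ v, w v * ‖v - c‖ ^ 2 ∂μ = (∫ v, w v ∂μ) * ‖c - x‖ ^ 2 := by
  have hpt : ∀ v, w v * ‖v - x‖ ^ 2 - w v * ‖v - c‖ ^ 2
      = 2 * ⟪c - x, w v • v⟫ + (‖x‖ ^ 2 - ‖c‖ ^ 2) * w v := by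
    intro v
    rw [norm_sub_sq_real, norm_sub_sq_real, real_inner_smul_right, inner_sub_left,
      real_inner_comm c, real_inner_comm x]
    ring
  rw [← integral_sub hx hc', integral_congr_ae (.of_forall hpt),
    integral_add ((hwv.const_inner _).const_mul 2) (hw.const_mul _), integral_const_mul,
    integral_inner hwv, ← hc, integral_const_mul, real_inner_smul_right, inner_sub_left,
    real_inner_self_eq_norm_sq, norm_sub_sq_real, real_inner_comm c]
  ring

theorem integral_mul_norm_sub_sq_le (hw : Integrable w μ) (hw₀ : 0 ≤ ∫ v, w v ∂μ)
    (hwv : Integrable (fun v => w v • v) μ) (hc : (∫ v, w v ∂μ) • c = ∫ v, w v • v ∂μ) (x : E)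
    (hx : Integrable (fun v => w v * ‖v - x‖ ^ 2) μ)
    (hc' : Integrable (fun v => w v * ‖v - c‖ ^ 2) μ) :
    ∫ v, w v * ‖v - c‖ ^ 2 ∂μ ≤ ∫ v, w v * ‖v - x‖ ^ 2 ∂μ := by
  have := integral_mul_norm_sub_sq_sub_integral_mul_norm_sub_sq hw hwv hc x hx hc'
  nlinarith [mul_nonneg hw₀ (sq_nonneg ‖c - x‖)]

theorem integral_norm_sub_sq_le_of_weight_bounds {L U : ℝ} (hL : 0 < L)
    (hwL : ∀ᵐ v ∂μ, L ≤ w v) (hwU : ∀ᵐ v ∂μ, w v ≤ U) (hw : Integrable w μ)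
    (hwv : Integrable (fun v => w v • v) μ) (hc : (∫ v, w v ∂μ) • c = ∫ v, w v • v ∂μ)
    (hsq : ∀ y, Integrable (fun v => ‖v - y‖ ^ 2) μ) (x : E) :
    ∫ v, ‖v - c‖ ^ 2 ∂μ ≤ U / L * ∫ v, ‖v - x‖ ^ 2 ∂μ := by
  have hw_norm : ∀ᵐ v ∂μ, ‖w v‖ ≤ U := by
    filter_upwards [hwL, hwU] with v hvL hvU
    rwa [Real.norm_of_nonneg (hL.le.trans hvL)]
  have hwsq : ∀ y, Integrable (fun v => w v * ‖v - y‖ ^ 2) μ := fun y =>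
    (hsq y).bdd_mul hw.aestronglyMeasurable hw_norm
  have hw₀ : 0 ≤ ∫ v, w v ∂μ := integral_nonneg_of_ae <| by
    filter_upwards [hwL] with v hv using hL.le.trans hv
  calc ∫ v, ‖v - c‖ ^ 2 ∂μ
      ≤ ∫ v, L⁻¹ * (w v * ‖v - c‖ ^ 2) ∂μ := by
        refine integral_mono_ae (hsq c) ((hwsq c).const_mul _) ?_
        filter_upwards [hwL] with v hv
        rw [← mul_assoc]
        exact le_mul_of_one_le_left (sq_nonneg _) ((one_le_inv_mul₀ hL).2 hv)
    _ = L⁻¹ * ∫ v, w v * ‖v - c‖ ^ 2 ∂μ := integral_const_mul _ _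
    _ ≤ L⁻¹ * ∫ v, w v * ‖v - x‖ ^ 2 ∂μ := by
        gcongr ?_ * ?_
        exact integral_mul_norm_sub_sq_le hw hw₀ hwv hc x (hwsq x) (hwsq c)
    _ ≤ L⁻¹ * ∫ v, U * ‖v - x‖ ^ 2 ∂μ := by
        gcongr ?_ * ?_
        refine integral_mono_ae (hwsq x) ((hsq x).const_mul _) ?_
        filter_upwards [hwU] with v hv
        gcongr
    _ = U / L * ∫ v, ‖v - x‖ ^ 2 ∂μ := by
        rw [integral_const_mul, div_eq_inv_mul, mul_assoc]

end WeightedMean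

section UnitSphereSupport

variable {E : Type*} [NormedAddCommGroup E] [MeasurableSpace E] [OpensMeasurableSpace E]
  {ρ : Measure E} [IsFiniteMeasure ρ]

theorem integrable_id_of_ae_norm_eq_one [SecondCountableTopology E] (hsph : ∀ᵐ v ∂ρ, ‖v‖ = 1) :
    Integrable (fun v => v) ρ :=
  .of_bound aestronglyMeasurable_id 1 (hsph.mono fun _ hv => hv.le)

theorem integrable_norm_sub_sq_of_ae_norm_eq_one (hsph : ∀ᵐ v ∂ρ, ‖v‖ = 1) (x : E) :
    Integrable (fun v => ‖v - x‖ ^ 2) ρ :=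
  .of_bound (by fun_prop : Continuous fun v => ‖v - x‖ ^ 2).aestronglyMeasurable
    ((1 + ‖x‖) ^ 2) <| by
    filter_upwards [hsph] with v hv
    rw [Real.norm_of_nonneg (sq_nonneg _)]
    gcongr
    exact (norm_sub_le v x).trans_eq (by rw [hv])

end UnitSphereSupport

theorem ae_mem_Icc_csInf_csSup {α β : Type*} [MeasurableSpace α] [ConditionallyCompleteLattice β]
    {μ : Measure α} {f : α → β} {s : Set α} (hs : ∀ᵐ x ∂μ, x ∈ s) (hf₁ : BddAbove (f '' s))
    (hf₂ : BddBelow (f '' s)) : ∀ᵐ x ∂μ, f x ∈ Set.Icc (sInf (f '' s)) (sSup (f '' s)) :=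
  hs.mono fun _ hx => ⟨csInf_le hf₂ (Set.mem_image_of_mem f hx),
    le_csSup hf₁ (Set.mem_image_of_mem f hx)⟩

theorem stmt_3_general {d : ℕ} (e : EuclideanSpace ℝ (Fin d) → ℝ) (α : ℝ) (hα : 0 < α)
    (hcont : ContinuousOn e (sphere (0 : EuclideanSpace ℝ (Fin d)) 1))
    (hbdd : BddAbove (e '' sphere (0 : EuclideanSpace ℝ (Fin d)) 1) ∧
      BddBelow (e '' sphere (0 : EuclideanSpace ℝ (Fin d)) 1))
    (ρ : Measure (EuclideanSpace ℝ (Fin d))) [IsProbabilityMeasure ρ]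
    (hsph : ∀ᵐ v ∂ρ, ‖v‖ = 1)
    (m : EuclideanSpace ℝ (Fin d))
    (V : ℝ) (hV : V = (1 / 2) * ∫ v, ‖v - m‖ ^ 2 ∂ρ)
    (vα : EuclideanSpace ℝ (Fin d))
    (hvα : vα = (∫ v, Real.exp (-α * e v) ∂ρ)⁻¹ • ∫ v, Real.exp (-α * e v) • v ∂ρ)
    (C : ℝ)
    (hC : C = Real.exp (α * (sSup (e '' sphere (0 : EuclideanSpace ℝ (Fin d)) 1)
      - sInf (e '' sphere (0 : EuclideanSpace ℝ (Fin d)) 1)))) :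
    ∫ v, ‖v - vα‖ ^ 2 ∂ρ ≤ 4 * C * V := by
  set S := sphere (0 : EuclideanSpace ℝ (Fin d)) 1
  set a := sInf (e '' S)
  set b := sSup (e '' S)
  set w := fun v => exp (-α * e v)
  have hS : ∀ᵐ v ∂ρ, v ∈ S := hsph.mono fun _ hv => mem_sphere_zero_iff_norm.2 hv
  have hwm : AEStronglyMeasurable w ρ := by
    have he := hcont.aestronglyMeasurable (μ := ρ) isClosed_sphere.measurableSet
    rw [Measure.restrict_eq_self_of_ae_mem hS] at he
    exact continuous_exp.comp_aestronglyMeasurable (he.const_mul _)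
  have hwab : ∀ᵐ v ∂ρ, exp (-α * b) ≤ w v ∧ w v ≤ exp (-α * a) := by
    filter_upwards [ae_mem_Icc_csInf_csSup hS hbdd.1 hbdd.2] with v hv
    exact ⟨exp_le_exp.2 (by nlinarith [hv.2]), exp_le_exp.2 (by nlinarith [hv.1])⟩
  have hw_norm : ∀ᵐ v ∂ρ, ‖w v‖ ≤ exp (-α * a) := by
    filter_upwards [hwab] with v hv
    rw [Real.norm_of_nonneg (exp_pos _).le]
    exact hv.2
  have hw : Integrable w ρ := .of_bound hwm _ hw_norm
  have hwv : Integrable (fun v => w v • v) ρ :=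
    (integrable_id_of_ae_norm_eq_one hsph).bdd_smul _ hwm hw_norm
  have hc : (∫ v, w v ∂ρ) • vα = ∫ v, w v • v ∂ρ := by
    rw [hvα, smul_inv_smul₀ (integral_exp_pos hw).ne']
  have hmain := integral_norm_sub_sq_le_of_weight_bounds (exp_pos _) (hwab.mono fun _ h => h.1)
    (hwab.mono fun _ h => h.2) hw hwv hc (integrable_norm_sub_sq_of_ae_norm_eq_one hsph) m
  have hC' : exp (-α * a) / exp (-α * b) = C := by
    rw [hC, ← exp_sub]
    ring_nf
  have hV₀ : 0 ≤ V := hV ▸ mul_nonneg (by norm_num) (integral_nonneg fun _ => sq_nonneg _)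
  calc ∫ v, ‖v - vα‖ ^ 2 ∂ρ ≤ C * ∫ v, ‖v - m‖ ^ 2 ∂ρ := hC' ▸ hmain
    _ = 2 * C * V := by rw [hV]; ring
    _ ≤ 4 * C * V := by nlinarith [show 0 < C from hC ▸ exp_pos _]

theorem stmt_3 {d : ℕ} (e : EuclideanSpace ℝ (Fin d) → ℝ) (α : ℝ) (hα : 0 < α)
    (hcont : ContinuousOn e (sphere (0 : EuclideanSpace ℝ (Fin d)) 1))
    (hbdd : BddAbove (e '' sphere (0 : EuclideanSpace ℝ (Fin d)) 1) ∧
      BddBelow (e '' sphere (0 : EuclideanSpace ℝ (Fin d)) 1))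
    (ρ : Measure (EuclideanSpace ℝ (Fin d))) [IsProbabilityMeasure ρ]
    (hsph : ∀ᵐ v ∂ρ, ‖v‖ = 1)
    (m : EuclideanSpace ℝ (Fin d)) (hm : m = ∫ w, w ∂ρ)
    (V : ℝ) (hV : V = (1 / 2) * ∫ v, ‖v - m‖ ^ 2 ∂ρ)
    (vα : EuclideanSpace ℝ (Fin d))
    (hvα : vα = (∫ v, Real.exp (-α * e v) ∂ρ)⁻¹ • ∫ v, Real.exp (-α * e v) • v ∂ρ)
    (C : ℝ)
    (hC : C = Real.exp (α * (sSup (e '' sphere (0 : EuclideanSpace ℝ (Fin d)) 1)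
      - sInf (e '' sphere (0 : EuclideanSpace ℝ (Fin d)) 1)))) :
    ∫ v, ‖v - vα‖ ^ 2 ∂ρ ≤ 4 * C * V :=
  stmt_3_general e α hα hcont hbdd ρ hsph m V hV vα hvα C hC
end

section
/- For a probability measure ρ on S^{d-1}, the Gibbs-weighted mean v_α satisfies |v_α|^2 ≥ 1 − 4 C_{α,E}^2 V(ρ), where C_{α,E} = e^{α(sup E − inf E)} and V(ρ) is the variance of ρ. -/
/-! On the unit sphere `∫ w ‖v‖² = ∫ w`, so for any centre `m` the weighted second moment
`∫ w ‖v - m‖²` equals `Z (1 - ‖v_w‖²) + Z ‖v_w - m‖²`, where `Z = ∫ w` and `v_w` is the weighted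
mean. Hence `Z (1 - ‖v_w‖²) ≤ ∫ w ‖v - m‖² ≤ (sup w) ∫ ‖v - m‖²`, and `Z ≥ inf w`. For Gibbs
weights `w = exp (-α E)` the ratio `sup w / inf w` is `C = exp (α (sup E - inf E))`, so
`1 - ‖v_α‖² ≤ 2 C V ≤ 4 C² V` because `C ≥ 1`. -/

open MeasureTheory Metric Real

open scoped RealInnerProductSpace

section WeightedMean

variable {E : Type*} [NormedAddCommGroup E] [InnerProductSpace ℝ E]

theorem mul_one_sub_norm_inv_smul_sq_le {Z : ℝ} (hZ : 0 < Z) (W m : E) :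
    Z * (1 - ‖Z⁻¹ • W‖ ^ 2) ≤ Z - 2 * ⟪m, W⟫ + Z * ‖m‖ ^ 2 := by
  obtain ⟨u, rfl⟩ : ∃ u, W = Z • u :=
    ⟨Z⁻¹ • W, by rw [smul_smul, mul_inv_cancel₀ hZ.ne', one_smul]⟩
  rw [smul_smul, inv_mul_cancel₀ hZ.ne', one_smul, real_inner_smul_right, real_inner_comm]
  nlinarith [mul_nonneg hZ.le (sq_nonneg ‖u - m‖), norm_sub_sq_real u m]

noncomputable def weightedMean [MeasurableSpace E] (ρ : Measure E) (w : E → ℝ) : E :=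
  (∫ v, w v ∂ρ)⁻¹ • ∫ v, w v • v ∂ρ

variable [CompleteSpace E] [MeasurableSpace E] {ρ : Measure E} {w : E → ℝ}

theorem integral_mul_norm_sub_sq_of_norm_eq_one (hsph : ∀ᵐ v ∂ρ, ‖v‖ = 1)
    (hw : Integrable w ρ) (hwv : Integrable (fun v ↦ w v • v) ρ) (m : E) :
    ∫ v, w v * ‖v - m‖ ^ 2 ∂ρ
      = ∫ v, w v ∂ρ - 2 * ⟪m, ∫ v, w v • v ∂ρ⟫ + (∫ v, w v ∂ρ) * ‖m‖ ^ 2 := by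
  have hpt : ∀ᵐ v ∂ρ, w v * ‖v - m‖ ^ 2 = w v - 2 * ⟪m, w v • v⟫ + w v * ‖m‖ ^ 2 := by
    filter_upwards [hsph] with v hv
    rw [norm_sub_sq_real, hv, real_inner_smul_right, real_inner_comm]
    ring
  have hinner := hwv.const_inner (𝕜 := ℝ) m
  rw [integral_congr_ae hpt, integral_add (by exact hw.sub (hinner.const_mul 2)) (hw.mul_const _),
    integral_sub hw (hinner.const_mul 2), integral_const_mul, integral_mul_const,
    integral_inner hwv]

theorem mul_one_sub_norm_weightedMean_sq_le_integral (hsph : ∀ᵐ v ∂ρ, ‖v‖ = 1)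
    (hw : Integrable w ρ) (hwv : Integrable (fun v ↦ w v • v) ρ) (hZ : 0 < ∫ v, w v ∂ρ) (m : E) :
    (∫ v, w v ∂ρ) * (1 - ‖weightedMean ρ w‖ ^ 2) ≤ ∫ v, w v * ‖v - m‖ ^ 2 ∂ρ := by
  rw [integral_mul_norm_sub_sq_of_norm_eq_one hsph hw hwv]
  exact mul_one_sub_norm_inv_smul_sq_le hZ _ m

variable [SecondCountableTopology E] [OpensMeasurableSpace E] [IsProbabilityMeasure ρ]

theorem one_sub_norm_weightedMean_sq_le (hsph : ∀ᵐ v ∂ρ, ‖v‖ = 1)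
    (hw : AEStronglyMeasurable w ρ) {a b : ℝ} (ha : 0 < a) (hwa : ∀ᵐ v ∂ρ, a ≤ w v)
    (hwb : ∀ᵐ v ∂ρ, w v ≤ b) (m : E) :
    1 - ‖weightedMean ρ w‖ ^ 2 ≤ b / a * ∫ v, ‖v - m‖ ^ 2 ∂ρ := by
  have hnorm_w : ∀ᵐ v ∂ρ, ‖w v‖ ≤ b := by
    filter_upwards [hwa, hwb] with v hva hvb
    rwa [norm_of_nonneg (ha.le.trans hva)]
  have hw_int : Integrable w ρ := Integrable.of_bound hw b hnorm_w
  have hwv_int : Integrable (fun v ↦ w v • v) ρ := by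
    refine Integrable.of_bound (hw.smul aestronglyMeasurable_id) b ?_
    filter_upwards [hnorm_w, hsph] with v hv hv1
    rwa [norm_smul, hv1, mul_one]
  have hdist_int : Integrable (fun v ↦ ‖v - m‖ ^ 2) ρ := by
    refine Integrable.of_bound (by fun_prop) ((1 + ‖m‖) ^ 2) ?_
    filter_upwards [hsph] with v hv
    rw [norm_pow, norm_norm]
    gcongr
    exact (norm_sub_le v m).trans_eq (by rw [hv])
  have haZ : a ≤ ∫ v, w v ∂ρ := by
    simpa using integral_mono_ae (integrable_const a) hw_int hwa
  have hab : a ≤ b := by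
    obtain ⟨v, hva, hvb⟩ := (hwa.and hwb).exists
    exact hva.trans hvb
  have hmoment : (∫ v, w v ∂ρ) * (1 - ‖weightedMean ρ w‖ ^ 2) ≤ b * ∫ v, ‖v - m‖ ^ 2 ∂ρ :=
    calc (∫ v, w v ∂ρ) * (1 - ‖weightedMean ρ w‖ ^ 2)
        ≤ ∫ v, w v * ‖v - m‖ ^ 2 ∂ρ :=
          mul_one_sub_norm_weightedMean_sq_le_integral hsph hw_int hwv_int (ha.trans_le haZ) m
      _ ≤ ∫ v, b * ‖v - m‖ ^ 2 ∂ρ := by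
          refine integral_mono_ae (hdist_int.bdd_mul hw hnorm_w) (hdist_int.const_mul b) ?_
          filter_upwards [hwb] with v hv
          gcongr
      _ = b * ∫ v, ‖v - m‖ ^ 2 ∂ρ := integral_const_mul _ _
  rw [div_mul_eq_mul_div, le_div_iff₀ ha]
  rcases le_or_gt (1 - ‖weightedMean ρ w‖ ^ 2) 0 with h | h
  · have : 0 ≤ b * ∫ v, ‖v - m‖ ^ 2 ∂ρ :=
      mul_nonneg (ha.le.trans hab) (integral_nonneg fun _ ↦ by positivity)
    nlinarith
  · nlinarith

end WeightedMean

theorem stmt_5_general {d : ℕ} (e : EuclideanSpace ℝ (Fin d) → ℝ) (α : ℝ) (hα : 0 < α)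
    (hcont : ContinuousOn e (sphere (0 : EuclideanSpace ℝ (Fin d)) 1))
    (hbdd : BddAbove (e '' sphere (0 : EuclideanSpace ℝ (Fin d)) 1) ∧
      BddBelow (e '' sphere (0 : EuclideanSpace ℝ (Fin d)) 1))
    (ρ : Measure (EuclideanSpace ℝ (Fin d))) [IsProbabilityMeasure ρ]
    (hsph : ∀ᵐ v ∂ρ, ‖v‖ = 1)
    (m : EuclideanSpace ℝ (Fin d))
    (V : ℝ) (hV : V = (1 / 2) * ∫ v, ‖v - m‖ ^ 2 ∂ρ)
    (vα : EuclideanSpace ℝ (Fin d))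
    (hvα : vα = (∫ v, Real.exp (-α * e v) ∂ρ)⁻¹ • ∫ v, Real.exp (-α * e v) • v ∂ρ)
    (C : ℝ)
    (hC : C = Real.exp (α * (sSup (e '' sphere (0 : EuclideanSpace ℝ (Fin d)) 1)
      - sInf (e '' sphere (0 : EuclideanSpace ℝ (Fin d)) 1)))) :
    1 - 4 * C ^ 2 * V ≤ ‖vα‖ ^ 2 := by
  obtain rfl : vα = weightedMean ρ (fun v ↦ exp (-α * e v)) := hvα
  set S := sphere (0 : EuclideanSpace ℝ (Fin d)) 1
  have hS : ∀ᵐ v ∂ρ, v ∈ S := by simpa [S] using hsph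
  have he : AEStronglyMeasurable e ρ := by
    simpa [Measure.restrict_eq_self_of_ae_mem hS] using
      hcont.aestronglyMeasurable (μ := ρ) isClosed_sphere.measurableSet
  have hle_sup : ∀ᵐ v ∂ρ, e v ≤ sSup (e '' S) := by
    filter_upwards [hS] with v hv using le_csSup hbdd.1 ⟨v, hv, rfl⟩
  have hinf_le : ∀ᵐ v ∂ρ, sInf (e '' S) ≤ e v := by
    filter_upwards [hS] with v hv using csInf_le hbdd.2 ⟨v, hv, rfl⟩
  have hkey := one_sub_norm_weightedMean_sq_le (w := fun v ↦ exp (-α * e v))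
    (b := exp (-α * sInf (e '' S))) hsph
    (continuous_exp.comp_aestronglyMeasurable (he.const_mul (-α))) (exp_pos (-α * sSup (e '' S)))
    (by filter_upwards [hle_sup] with v hv using exp_le_exp.mpr (by nlinarith))
    (by filter_upwards [hinf_le] with v hv using exp_le_exp.mpr (by nlinarith)) m
  have hratio : exp (-α * sInf (e '' S)) / exp (-α * sSup (e '' S)) = C := by
    rw [hC, ← exp_sub]; ring_nf
  rw [hratio, show ∫ v, ‖v - m‖ ^ 2 ∂ρ = 2 * V by rw [hV]; ring] at hkey
  have hC1 : 1 ≤ C := by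
    obtain ⟨v, hv⟩ := (hle_sup.and hinf_le).exists
    rw [hC]
    exact one_le_exp (mul_nonneg hα.le (by linarith [hv.1, hv.2]))
  have hV0 : 0 ≤ V := by
    rw [hV]
    exact mul_nonneg (by norm_num) (integral_nonneg fun _ ↦ by positivity)
  calc 1 - 4 * C ^ 2 * V ≤ 1 - C * (2 * V) := by
        nlinarith [mul_nonneg (mul_nonneg hV0 (zero_le_one.trans hC1)) (sub_nonneg.mpr hC1)]
    _ ≤ _ := by linarith

theorem stmt_5 {d : ℕ} (e : EuclideanSpace ℝ (Fin d) → ℝ) (α : ℝ) (hα : 0 < α)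
    (hcont : ContinuousOn e (sphere (0 : EuclideanSpace ℝ (Fin d)) 1))
    (hbdd : BddAbove (e '' sphere (0 : EuclideanSpace ℝ (Fin d)) 1) ∧
      BddBelow (e '' sphere (0 : EuclideanSpace ℝ (Fin d)) 1))
    (ρ : Measure (EuclideanSpace ℝ (Fin d))) [IsProbabilityMeasure ρ]
    (hsph : ∀ᵐ v ∂ρ, ‖v‖ = 1)
    (m : EuclideanSpace ℝ (Fin d)) (hm : m = ∫ w, w ∂ρ)
    (V : ℝ) (hV : V = (1 / 2) * ∫ v, ‖v - m‖ ^ 2 ∂ρ)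
    (vα : EuclideanSpace ℝ (Fin d))
    (hvα : vα = (∫ v, Real.exp (-α * e v) ∂ρ)⁻¹ • ∫ v, Real.exp (-α * e v) • v ∂ρ)
    (C : ℝ)
    (hC : C = Real.exp (α * (sSup (e '' sphere (0 : EuclideanSpace ℝ (Fin d)) 1)
      - sInf (e '' sphere (0 : EuclideanSpace ℝ (Fin d)) 1)))) :
    1 - 4 * C ^ 2 * V ≤ ‖vα‖ ^ 2 :=
  stmt_5_general e α hα hcont hbdd ρ hsph m V hV vα hvα C hC
end

section
/- For a probability measure ρ on S^{d-1}, the Gibbs-weighted mean v_α and the ordinary mean E(ρ) satisfy |v_α − E(ρ)|^2 ≤ (4 C_{α,E}^2 − 2) V(ρ). -/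
/-!
Centering at `m` gives `v_α - m = Z⁻¹ ∫ e^{-αE(v)} (v - m) dρ` with `Z = ∫ e^{-αE} dρ`. The weight
lies between `e^{-α sup E}` and `e^{-α inf E}`, so `Z ≥ e^{-α sup E}` and
`|v_α - m| ≤ C ∫ |v - m| dρ`. Jensen's inequality bounds the square of the last integral by
`∫ |v - m|² dρ = 2 V`, and `2 C² ≤ 4 C² - 2` because `C ≥ 1`.
-/

open MeasureTheory Metric Real

lemma sq_integral_le_integral_sq {Ω : Type*} [MeasurableSpace Ω] {μ : Measure Ω}
    [IsProbabilityMeasure μ] {f : Ω → ℝ} (hf : MemLp f 2 μ) :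
    (∫ x, f x ∂μ) ^ 2 ≤ ∫ x, f x ^ 2 ∂μ := by
  have h := ProbabilityTheory.variance_nonneg f μ
  rw [ProbabilityTheory.variance_eq_sub hf] at h
  simp only [Pi.pow_apply] at h
  linarith

lemma sq_integral_norm_sub_le {E : Type*} [NormedAddCommGroup E] [MeasurableSpace E]
    {μ : Measure E} [IsProbabilityMeasure μ] (hx : MemLp (fun x ↦ x) 2 μ) (m : E) :
    (∫ x, ‖x - m‖ ∂μ) ^ 2 ≤ ∫ x, ‖x - m‖ ^ 2 ∂μ :=
  sq_integral_le_integral_sq (hx.sub (memLp_const m)).norm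

lemma exp_neg_mul_mem_Icc_of_mem {X : Type*} {f : X → ℝ} {s : Set X} {α : ℝ} (hα : 0 ≤ α)
    (hA : BddAbove (f '' s)) (hB : BddBelow (f '' s)) {x : X} (hx : x ∈ s) :
    exp (-α * f x) ∈ Set.Icc (exp (-α * sSup (f '' s))) (exp (-α * sInf (f '' s))) := by
  have hα' : -α ≤ 0 := neg_nonpos.2 hα
  exact ⟨exp_le_exp.2 (mul_le_mul_of_nonpos_left (le_csSup hA (Set.mem_image_of_mem f hx)) hα'),
    exp_le_exp.2 (mul_le_mul_of_nonpos_left (csInf_le hB (Set.mem_image_of_mem f hx)) hα')⟩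

section WeightedMean

variable {E : Type*} [NormedAddCommGroup E] [NormedSpace ℝ E] [CompleteSpace E]
  [MeasurableSpace E] {μ : Measure E}

lemma inv_integral_smul_integral_smul_sub {w : E → ℝ} (hw : Integrable w μ)
    (hwx : Integrable (fun x ↦ w x • x) μ) (hw0 : ∫ x, w x ∂μ ≠ 0) (m : E) :
    (∫ x, w x ∂μ)⁻¹ • ∫ x, w x • x ∂μ - m = (∫ x, w x ∂μ)⁻¹ • ∫ x, w x • (x - m) ∂μ := by
  simp_rw [smul_sub]
  rw [integral_sub hwx (hw.smul_const m), integral_smul_const, smul_sub, smul_smul,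
    inv_mul_cancel₀ hw0, one_smul]

theorem norm_weighted_mean_sub_le [IsProbabilityMeasure μ] {w : E → ℝ} {a b : ℝ} (ha : 0 < a)
    (hw : AEStronglyMeasurable w μ) (hwab : ∀ᵐ x ∂μ, w x ∈ Set.Icc a b)
    (hx : Integrable (fun x ↦ x) μ) (m : E) :
    ‖(∫ x, w x ∂μ)⁻¹ • ∫ x, w x • x ∂μ - m‖ ≤ b / a * ∫ x, ‖x - m‖ ∂μ := by
  have hnorm_w : ∀ᵐ x ∂μ, ‖w x‖ ≤ b := by
    filter_upwards [hwab] with x hx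
    rw [Real.norm_of_nonneg (ha.le.trans hx.1)]
    exact hx.2
  have hw_int : Integrable w μ := Integrable.of_bound hw b hnorm_w
  have hwx_int : Integrable (fun x ↦ w x • x) μ := hx.bdd_smul b hw hnorm_w
  have hdist_int : Integrable (fun x ↦ ‖x - m‖) μ := (hx.sub (integrable_const m)).norm
  have hZ : a ≤ ∫ x, w x ∂μ := by
    simpa using integral_mono_ae (integrable_const a) hw_int (hwab.mono fun _ hx ↦ hx.1)
  have hZ_pos : 0 < ∫ x, w x ∂μ := ha.trans_le hZ
  have hpointwise : ∀ᵐ x ∂μ, ‖w x • (x - m)‖ ≤ b * ‖x - m‖ := by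
    filter_upwards [hnorm_w] with x hx
    rw [norm_smul]
    exact mul_le_mul_of_nonneg_right hx (norm_nonneg _)
  calc ‖(∫ x, w x ∂μ)⁻¹ • ∫ x, w x • x ∂μ - m‖
      = (∫ x, w x ∂μ)⁻¹ * ‖∫ x, w x • (x - m) ∂μ‖ := by
        rw [inv_integral_smul_integral_smul_sub hw_int hwx_int hZ_pos.ne' m, norm_smul,
          Real.norm_of_nonneg (inv_nonneg.2 hZ_pos.le)]
    _ ≤ a⁻¹ * ∫ x, b * ‖x - m‖ ∂μ := by
        gcongr
        exact norm_integral_le_of_norm_le (hdist_int.const_mul b) hpointwise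
    _ = b / a * ∫ x, ‖x - m‖ ∂μ := by
        rw [integral_const_mul, div_eq_inv_mul, mul_assoc]

theorem norm_gibbs_mean_sub_le [IsProbabilityMeasure μ] {f : E → ℝ} {s : Set E} {α : ℝ}
    (hα : 0 ≤ α) (hf : AEMeasurable f μ) (hs : ∀ᵐ x ∂μ, x ∈ s) (hA : BddAbove (f '' s))
    (hB : BddBelow (f '' s)) (hx : Integrable (fun x ↦ x) μ) (m : E) :
    ‖(∫ x, exp (-α * f x) ∂μ)⁻¹ • ∫ x, exp (-α * f x) • x ∂μ - m‖ ≤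
      exp (α * (sSup (f '' s) - sInf (f '' s))) * ∫ x, ‖x - m‖ ∂μ := by
  have hratio : exp (-α * sInf (f '' s)) / exp (-α * sSup (f '' s)) =
      exp (α * (sSup (f '' s) - sInf (f '' s))) := by
    rw [← exp_sub]
    ring_nf
  rw [← hratio]
  exact norm_weighted_mean_sub_le (exp_pos _) (by fun_prop : AEMeasurable _ μ).aestronglyMeasurable
    (hs.mono fun _ hx ↦ exp_neg_mul_mem_Icc_of_mem hα hA hB hx) hx m

end WeightedMean

theorem stmt_6_general {d : ℕ} (e : EuclideanSpace ℝ (Fin d) → ℝ) (α : ℝ) (hα : 0 < α)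
    (hcont : ContinuousOn e (sphere (0 : EuclideanSpace ℝ (Fin d)) 1))
    (hbdd : BddAbove (e '' sphere (0 : EuclideanSpace ℝ (Fin d)) 1) ∧
      BddBelow (e '' sphere (0 : EuclideanSpace ℝ (Fin d)) 1))
    (ρ : Measure (EuclideanSpace ℝ (Fin d))) [IsProbabilityMeasure ρ]
    (hsph : ∀ᵐ v ∂ρ, ‖v‖ = 1)
    (m : EuclideanSpace ℝ (Fin d))
    (V : ℝ) (hV : V = (1 / 2) * ∫ v, ‖v - m‖ ^ 2 ∂ρ)
    (vα : EuclideanSpace ℝ (Fin d))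
    (hvα : vα = (∫ v, Real.exp (-α * e v) ∂ρ)⁻¹ • ∫ v, Real.exp (-α * e v) • v ∂ρ)
    (C : ℝ)
    (hC : C = Real.exp (α * (sSup (e '' sphere (0 : EuclideanSpace ℝ (Fin d)) 1)
      - sInf (e '' sphere (0 : EuclideanSpace ℝ (Fin d)) 1)))) :
    ‖vα - m‖ ^ 2 ≤ (4 * C ^ 2 - 2) * V := by
  obtain ⟨hA, hB⟩ := hbdd
  have hS : ∀ᵐ v ∂ρ, v ∈ sphere (0 : EuclideanSpace ℝ (Fin d)) 1 := by simpa using hsph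
  have he : AEMeasurable e ρ := by
    simpa [Measure.restrict_eq_self_of_ae_mem hS] using
      hcont.aemeasurable (μ := ρ) isClosed_sphere.measurableSet
  have hid : MemLp (fun v ↦ v) 2 ρ :=
    MemLp.of_bound aestronglyMeasurable_id 1 (hsph.mono fun _ hv ↦ hv.le)
  have hmean : ‖vα - m‖ ≤ C * ∫ v, ‖v - m‖ ∂ρ := by
    rw [hvα, hC]
    exact norm_gibbs_mean_sub_le hα.le he hS hA hB (hid.integrable one_le_two) m
  have hjensen : (∫ v, ‖v - m‖ ∂ρ) ^ 2 ≤ 2 * V := by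
    rw [hV, ← mul_assoc, mul_one_div_cancel two_ne_zero, one_mul]
    exact sq_integral_norm_sub_le hid m
  have hC1 : 1 ≤ C := by
    obtain ⟨v, hv⟩ := hS.exists
    rw [hC]
    exact one_le_exp (mul_nonneg hα.le (sub_nonneg.2 (csInf_le_csSup ⟨e v, v, hv, rfl⟩ hB hA)))
  have hV0 : 0 ≤ V := by rw [hV]; positivity
  calc ‖vα - m‖ ^ 2 ≤ (C * ∫ v, ‖v - m‖ ∂ρ) ^ 2 := by gcongr
    _ ≤ C ^ 2 * (2 * V) := by rw [mul_pow]; gcongr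
    _ ≤ (4 * C ^ 2 - 2) * V := by
        nlinarith [mul_nonneg (sub_nonneg.2 (one_le_pow₀ hC1 : 1 ≤ C ^ 2)) hV0]

theorem stmt_6 {d : ℕ} (e : EuclideanSpace ℝ (Fin d) → ℝ) (α : ℝ) (hα : 0 < α)
    (hcont : ContinuousOn e (sphere (0 : EuclideanSpace ℝ (Fin d)) 1))
    (hbdd : BddAbove (e '' sphere (0 : EuclideanSpace ℝ (Fin d)) 1) ∧
      BddBelow (e '' sphere (0 : EuclideanSpace ℝ (Fin d)) 1))
    (ρ : Measure (EuclideanSpace ℝ (Fin d))) [IsProbabilityMeasure ρ]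
    (hsph : ∀ᵐ v ∂ρ, ‖v‖ = 1)
    (m : EuclideanSpace ℝ (Fin d)) (hm : m = ∫ w, w ∂ρ)
    (V : ℝ) (hV : V = (1 / 2) * ∫ v, ‖v - m‖ ^ 2 ∂ρ)
    (vα : EuclideanSpace ℝ (Fin d))
    (hvα : vα = (∫ v, Real.exp (-α * e v) ∂ρ)⁻¹ • ∫ v, Real.exp (-α * e v) • v ∂ρ)
    (C : ℝ)
    (hC : C = Real.exp (α * (sSup (e '' sphere (0 : EuclideanSpace ℝ (Fin d)) 1)
      - sInf (e '' sphere (0 : EuclideanSpace ℝ (Fin d)) 1)))) :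
    ‖vα - m‖ ^ 2 ≤ (4 * C ^ 2 - 2) * V :=
  stmt_6_general e α hα hcont hbdd ρ hsph m V hV vα hvα C hC
end
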